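/- Formal algebraic version of the Lickorish–Millett theorem for L components: suppose for every nonempty subset S of {1,...,L} we are given a Laurent series P_S(z, λ) in z with lowest z-degree ≥ 1 − |S|, with P_{{α}} having lowest degree ≥ 0; define W_S = λ^{lk(S)}·((λ^{1/2}−λ^{−1/2})/z)·P_S, and suppose that for every S with |S| ≥ 2 the connected combination W^{(c)}_S = Σ_{partitions π of S} (−1)^{|π|−1}(|π|−1)! ∏_{B ∈ π} W_B has z-order ≥ |S| − 2. Then for the full set S = {1,...,L}, the coefficient of z^{1−L} in P_S equals λ^{−lk(S)}(λ^{1/2}−λ^{−1/2})^{L−1} ∏_{α=1}^L (coefficient of z^0 in P_{{α}}). -/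

import Mathlib

open LaurentPolynomial HahnSeries

/-- The coefficient ring: Laurent polynomials in `λ^{1/2}` over `ℚ`, where
`T 1 = λ^{1/2}` and `T (2*j) = λ^j`. -/
abbrev LamRing : Type := LaurentPolynomial ℚ

/-- `z⁻¹`, where `z = q^{1/2} - q^{-1/2}` is the Laurent series variable. -/
noncomputable def zinv : LaurentSeries LamRing := HahnSeries.single (-1 : ℤ) (1 : LamRing)

/-- Total linking number of the sublink with components in `S`:
`lk(S) = ∑_{α<β ∈ S} lk_{αβ}` (zero when `|S| = 1`). -/
def lkS {L : ℕ} (lk : Fin L → Fin L → ℤ) (S : Finset (Fin L)) : ℤ :=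
  ∑ p ∈ (S ×ˢ S).filter fun p => p.1 < p.2, lk p.1 p.2

/-- `W_S = λ^{lk(S)} (λ^{1/2} - λ^{-1/2}) z⁻¹ P_S`. -/
noncomputable def WS {L : ℕ} (lk : Fin L → Fin L → ℤ)
    (P : Finset (Fin L) → LaurentSeries LamRing) (S : Finset (Fin L)) :
    LaurentSeries LamRing :=
  HahnSeries.C (T (2 * lkS lk S) * (T 1 - T (-1)) : LamRing) * zinv * P S

/-- The finite set of partitions of the finite set `S` into nonempty pairwise
disjoint blocks covering `S`. -/
def partitionsOf {L : ℕ} (S : Finset (Fin L)) : Finset (Finset (Finset (Fin L))) :=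
  S.powerset.powerset.filter fun P =>
    ∅ ∉ P ∧ P.sup id = S ∧ ∀ B ∈ P, ∀ B' ∈ P, B ≠ B' → B ∩ B' = ∅

/-- The connected combination
`W^{(c)}_S = ∑_{partitions π of S} (-1)^{|π|-1} (|π|-1)! ∏_{B ∈ π} W_B`. -/
noncomputable def WconnS {L : ℕ} (lk : Fin L → Fin L → ℤ)
    (P : Finset (Fin L) → LaurentSeries LamRing) (S : Finset (Fin L)) :
    LaurentSeries LamRing :=
  ∑ π ∈ partitionsOf S,
    (-1 : LaurentSeries LamRing) ^ (π.card - 1) *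
      (Nat.factorial (π.card - 1) : LaurentSeries LamRing) *
        ∏ B ∈ π, WS lk P B


section Helpers
open Finset

variable {R : Type*} [CommRing R]

theorem coeff_mul_lt {f g : HahnSeries ℤ R} {a b : ℤ}
    (hf : ∀ m < a, f.coeff m = 0) (hg : ∀ m < b, g.coeff m = 0) :
    (∀ n < a + b, (f * g).coeff n = 0) ∧ (f * g).coeff (a + b) = f.coeff a * g.coeff b := by
  constructor
  · intro n hn
    rw [HahnSeries.coeff_mul]
    refine Finset.sum_eq_zero fun ij hij => ?_
    rw [Finset.mem_addAntidiagonal] at hij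
    rcases lt_or_ge ij.1 a with h | h
    · rw [hf _ h, zero_mul]
    · have : ij.2 < b := by omega
      rw [hg _ this, mul_zero]
  · rw [HahnSeries.coeff_mul]
    rcases eq_or_ne (f.coeff a) 0 with h0 | h0
    · rw [h0, zero_mul]
      refine Finset.sum_eq_zero fun ij hij => ?_
      rw [Finset.mem_addAntidiagonal] at hij
      rcases lt_or_ge ij.1 a with h | h
      · rw [hf _ h, zero_mul]
      · rcases eq_or_lt_of_le h with h | h
        · rw [← h, h0, zero_mul]
        · have : ij.2 < b := by omega
          rw [hg _ this, mul_zero]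
    rcases eq_or_ne (g.coeff b) 0 with h1 | h1
    · rw [h1, mul_zero]
      refine Finset.sum_eq_zero fun ij hij => ?_
      rw [Finset.mem_addAntidiagonal] at hij
      rcases lt_or_ge ij.1 a with h | h
      · rw [hf _ h, zero_mul]
      · rcases eq_or_lt_of_le h with h | h
        · have : ij.2 = b := by omega
          rw [this, h1, mul_zero]
        · have : ij.2 < b := by omega
          rw [hg _ this, mul_zero]
    · rw [Finset.sum_eq_single (a, b)]
      · intro ij hij hne
        rw [Finset.mem_addAntidiagonal] at hij
        rcases lt_or_ge ij.1 a with h | h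
        · rw [hf _ h, zero_mul]
        · rcases eq_or_lt_of_le h with h | h
          · exact absurd (Prod.ext h.symm (by omega)) hne
          · have : ij.2 < b := by omega
            rw [hg _ this, mul_zero]
      · intro h
        exfalso; exact h (Finset.mem_addAntidiagonal.2 ⟨h0, h1, rfl⟩)

theorem coeff_prod_lt {ι : Type*} [DecidableEq ι] {f : ι → HahnSeries ℤ R} {o : ι → ℤ}
    (s : Finset ι) (h : ∀ i ∈ s, ∀ m < o i, (f i).coeff m = 0) :
    (∀ n < ∑ i ∈ s, o i, (∏ i ∈ s, f i).coeff n = 0) ∧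
      (∏ i ∈ s, f i).coeff (∑ i ∈ s, o i) = ∏ i ∈ s, (f i).coeff (o i) := by
  induction s using Finset.cons_induction with
  | empty =>
    refine ⟨fun n hn => ?_, ?_⟩
    · simp only [Finset.prod_empty]
      rw [HahnSeries.coeff_one, if_neg (by simp at hn; omega)]
    · simp
  | cons i s his ih =>
    have hi := h i (Finset.mem_cons_self i s)
    have ihs := ih fun j hj => h j (Finset.mem_cons_of_mem hj)
    rw [Finset.prod_cons, Finset.sum_cons, Finset.prod_cons]
    have := coeff_mul_lt (f := f i) (g := ∏ j ∈ s, f j) hi ihs.1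
    exact ⟨this.1, by rw [this.2, ihs.2]⟩

theorem mem_partitionsOf {L : ℕ} {S : Finset (Fin L)} {π : Finset (Finset (Fin L))} :
    π ∈ partitionsOf S ↔
      (∀ B ∈ π, B ⊆ S) ∧ ∅ ∉ π ∧ π.sup id = S ∧
        ∀ B ∈ π, ∀ B' ∈ π, B ≠ B' → B ∩ B' = ∅ := by
  simp only [partitionsOf, mem_filter, mem_powerset, and_assoc]
  constructor
  · rintro ⟨h1, h⟩
    exact ⟨fun B hB => mem_powerset.1 (h1 hB), h⟩
  · rintro ⟨h1, h⟩
    exact ⟨fun B hB => mem_powerset.2 (h1 B hB), h⟩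

theorem filter_blockOf {L : ℕ} {S : Finset (Fin L)} {π : Finset (Finset (Fin L))}
    (hπ : π ∈ partitionsOf S) {x : Fin L} (hx : x ∈ S) :
    ∃ B, π.filter (fun B => x ∈ B) = {B} ∧ B ∈ π ∧ x ∈ B := by
  obtain ⟨hsub, hne, hsup, hdis⟩ := mem_partitionsOf.1 hπ
  rw [← hsup] at hx
  obtain ⟨B, hB, hxB⟩ := Finset.mem_sup.1 hx
  refine ⟨B, ?_, hB, hxB⟩
  ext C
  simp only [mem_filter, mem_singleton]
  constructor
  · rintro ⟨hC, hxC⟩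
    by_contra hne'
    have := hdis C hC B hB hne'
    have : x ∈ C ∩ B := Finset.mem_inter.2 ⟨hxC, hxB⟩
    simp_all
  · rintro rfl; exact ⟨hB, hxB⟩

def blockOf {L : ℕ} (x : Fin L) (π : Finset (Finset (Fin L))) : Finset (Fin L) :=
  (π.filter fun B => x ∈ B).sup id

theorem blockOf_spec {L : ℕ} {S : Finset (Fin L)} {π : Finset (Finset (Fin L))}
    (hπ : π ∈ partitionsOf S) {x : Fin L} (hx : x ∈ S) :
    blockOf x π ∈ π ∧ x ∈ blockOf x π := by
  obtain ⟨B, hfB, hB, hxB⟩ := filter_blockOf hπ hx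
  rw [blockOf, hfB, Finset.sup_singleton]
  exact ⟨hB, hxB⟩

theorem erase_blockOf_mem {L : ℕ} {S : Finset (Fin L)} {π : Finset (Finset (Fin L))}
    (hπ : π ∈ partitionsOf S) {x : Fin L} (hx : x ∈ S) :
    π.erase (blockOf x π) ∈ partitionsOf (S \ blockOf x π) := by
  obtain ⟨hB0, hxB0⟩ := blockOf_spec hπ hx
  obtain ⟨hsub, hne, hsup, hdis⟩ := mem_partitionsOf.1 hπ
  set B0 := blockOf x π with hB0def
  refine mem_partitionsOf.2 ⟨?_, ?_, ?_, ?_⟩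
  · intro B hB
    obtain ⟨hBne, hBπ⟩ := Finset.mem_erase.1 hB
    rw [Finset.subset_sdiff]
    refine ⟨hsub B hBπ, Finset.disjoint_iff_inter_eq_empty.2 (hdis B hBπ B0 hB0 hBne)⟩
  · intro h
    exact hne (Finset.mem_of_mem_erase h)
  · ext y
    simp only [Finset.mem_sup, Finset.mem_erase, id, Finset.mem_sdiff]
    constructor
    · rintro ⟨B, ⟨hBne, hBπ⟩, hyB⟩
      refine ⟨hsup ▸ Finset.mem_sup.2 ⟨B, hBπ, hyB⟩, fun hyB0 => ?_⟩
      have := hdis B hBπ B0 hB0 hBne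
      have : y ∈ B ∩ B0 := Finset.mem_inter.2 ⟨hyB, hyB0⟩
      simp_all
    · rintro ⟨hyS, hyB0⟩
      rw [← hsup] at hyS
      obtain ⟨B, hBπ, hyB⟩ := Finset.mem_sup.1 hyS
      exact ⟨B, ⟨fun h => hyB0 (h ▸ hyB), hBπ⟩, hyB⟩
  · intro B hB B' hB' hne'
    exact hdis B (Finset.mem_of_mem_erase hB) B' (Finset.mem_of_mem_erase hB') hne'

theorem insert_mem_partitionsOf {L : ℕ} {S B : Finset (Fin L)} (hBS : B ⊆ S)
    (hBne : B.Nonempty) {π' : Finset (Finset (Fin L))}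
    (hπ' : π' ∈ partitionsOf (S \ B)) : insert B π' ∈ partitionsOf S := by
  obtain ⟨hsub, hne, hsup, hdis⟩ := mem_partitionsOf.1 hπ'
  have hdisj : ∀ B' ∈ π', B' ∩ B = ∅ := by
    intro B' hB'
    have := Finset.subset_sdiff.1 (hsub B' hB')
    exact Finset.disjoint_iff_inter_eq_empty.1 this.2
  refine mem_partitionsOf.2 ⟨?_, ?_, ?_, ?_⟩
  · intro C hC
    rcases Finset.mem_insert.1 hC with rfl | hC
    · exact hBS
    · exact (hsub C hC).trans (Finset.sdiff_subset)
  · intro h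
    rcases Finset.mem_insert.1 h with h | h
    · exact hBne.ne_empty h.symm
    · exact hne h
  · rw [Finset.sup_insert, hsup, id]
    exact Finset.union_sdiff_of_subset hBS
  · intro C hC C' hC' hne'
    rcases Finset.mem_insert.1 hC with h1 | h1 <;> rcases Finset.mem_insert.1 hC' with h2 | h2
    · exact absurd (h1.trans h2.symm) hne'
    · subst h1; rw [Finset.inter_comm]; exact hdisj C' h2
    · subst h2; exact hdisj C h1
    · exact hdis C h1 C' h2 hne'

theorem blockOf_insert {L : ℕ} {S B : Finset (Fin L)} {x : Fin L} (hxB : x ∈ B)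
    {π' : Finset (Finset (Fin L))} (hπ' : π' ∈ partitionsOf (S \ B)) :
    blockOf x (insert B π') = B := by
  obtain ⟨hsub, hne, hsup, hdis⟩ := mem_partitionsOf.1 hπ'
  have hxnot : ∀ B' ∈ π', x ∉ B' := by
    intro B' hB' hxB'
    have := hsub B' hB' hxB'
    rw [Finset.mem_sdiff] at this
    exact this.2 hxB
  rw [blockOf]
  have : (insert B π').filter (fun C => x ∈ C) = {B} := by
    ext C
    simp only [mem_filter, Finset.mem_insert, mem_singleton]
    constructor
    · rintro ⟨rfl | hC, hxC⟩
      · rfl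
      · exact absurd hxC (hxnot C hC)
    · rintro rfl; exact ⟨Or.inl rfl, hxB⟩
  rw [this, Finset.sup_singleton, id]

theorem B_not_mem {L : ℕ} {S B : Finset (Fin L)} {x : Fin L} (hxB : x ∈ B)
    {π' : Finset (Finset (Fin L))} (hπ' : π' ∈ partitionsOf (S \ B)) : B ∉ π' := by
  intro h
  obtain ⟨hsub, _, _, _⟩ := mem_partitionsOf.1 hπ'
  have := hsub B h hxB
  rw [Finset.mem_sdiff] at this
  exact this.2 hxB

theorem sum_partitionsOf {L : ℕ} {M : Type*} [AddCommMonoid M] {S : Finset (Fin L)}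
    {x : Fin L} (hx : x ∈ S) (f : Finset (Finset (Fin L)) → M) :
    ∑ π ∈ partitionsOf S, f π =
      ∑ B ∈ S.powerset.filter (fun B => x ∈ B),
        ∑ π' ∈ partitionsOf (S \ B), f (insert B π') := by
  rw [← Finset.sum_sigma (S.powerset.filter (fun B => x ∈ B))
      (fun B => partitionsOf (S \ B)) (fun p => f (insert p.1 p.2))]
  refine Finset.sum_nbij' (fun π => ⟨blockOf x π, π.erase (blockOf x π)⟩)
    (fun p => insert p.1 p.2) ?_ ?_ ?_ ?_ ?_
  · intro π hπ
    obtain ⟨hB0, hxB0⟩ := blockOf_spec hπ hx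
    refine Finset.mem_sigma.2 ⟨Finset.mem_filter.2 ⟨Finset.mem_powerset.2 ?_, hxB0⟩,
      erase_blockOf_mem hπ hx⟩
    exact (mem_partitionsOf.1 hπ).1 _ hB0
  · rintro ⟨B, π'⟩ hp
    obtain ⟨hB, hπ'⟩ := Finset.mem_sigma.1 hp
    obtain ⟨hBS, hxB⟩ := Finset.mem_filter.1 hB
    exact insert_mem_partitionsOf (Finset.mem_powerset.1 hBS) ⟨x, hxB⟩ hπ'
  · intro π hπ
    exact Finset.insert_erase (blockOf_spec hπ hx).1
  · rintro ⟨B, π'⟩ hp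
    obtain ⟨hB, hπ'⟩ := Finset.mem_sigma.1 hp
    obtain ⟨hBS, hxB⟩ := Finset.mem_filter.1 hB
    have h1 : blockOf x (insert B π') = B := blockOf_insert hxB hπ'
    dsimp only
    rw [h1, Finset.erase_insert (B_not_mem hxB hπ')]
  · intro π hπ
    dsimp only
    rw [Finset.insert_erase (blockOf_spec hπ hx).1]

theorem partitionsOf_empty {L : ℕ} : partitionsOf (∅ : Finset (Fin L)) = {∅} := by
  ext π
  simp only [Finset.mem_singleton]
  constructor
  · intro hπ
    obtain ⟨hsub, hne, hsup, hdis⟩ := mem_partitionsOf.1 hπ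
    rw [Finset.eq_empty_iff_forall_notMem]
    intro B hB
    have h1 := hsub B hB
    rw [Finset.subset_empty] at h1
    exact hne (h1 ▸ hB)
  · rintro rfl
    exact mem_partitionsOf.2 ⟨by simp, by simp, by simp, by simp⟩

theorem sum_powerset_pow {ι R : Type*} [DecidableEq ι] [CommRing R] (b : R) (s : Finset ι) :
    ∑ C ∈ s.powerset, b ^ (s.card - C.card) = (b + 1) ^ s.card := by
  induction s using Finset.induction_on with
  | empty => simp
  | @insert a s ha ih =>
    rw [Finset.sum_powerset_insert ha, Finset.card_insert_of_notMem ha]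
    have h1 : ∑ C ∈ s.powerset, b ^ (s.card + 1 - C.card)
        = b * ∑ C ∈ s.powerset, b ^ (s.card - C.card) := by
      rw [Finset.mul_sum]
      refine Finset.sum_congr rfl fun C hC => ?_
      have := Finset.card_le_card (Finset.mem_powerset.1 hC)
      rw [show s.card + 1 - C.card = (s.card - C.card) + 1 by omega, pow_succ, mul_comm]
    have h2 : ∑ C ∈ s.powerset, b ^ (s.card + 1 - (insert a C).card)
        = ∑ C ∈ s.powerset, b ^ (s.card - C.card) := by
      refine Finset.sum_congr rfl fun C hC => ?_
      have hac : a ∉ C := fun h => ha (Finset.mem_powerset.1 hC h)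
      rw [Finset.card_insert_of_notMem hac]
      congr 1
      omega
    rw [h1, h2, ih, pow_succ]
    ring

theorem partition_poly_identity {L : ℕ} {R : Type*} [CommRing R] (S : Finset (Fin L)) :
    ∀ t : R, ∑ π ∈ partitionsOf S, ∏ i ∈ Finset.range π.card, (t - (i : R)) = t ^ S.card := by
  induction S using Finset.strongInduction with
  | _ S ih =>
    intro t
    rcases S.eq_empty_or_nonempty with rfl | ⟨x, hx⟩
    · rw [partitionsOf_empty]; simp
    · rw [sum_partitionsOf hx]
      have step : ∀ B ∈ S.powerset.filter (fun B => x ∈ B),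
          ∑ π' ∈ partitionsOf (S \ B),
            ∏ i ∈ Finset.range (insert B π').card, (t - (i : R))
          = t * (t - 1) ^ (S \ B).card := by
        intro B hB
        obtain ⟨hBS, hxB⟩ := Finset.mem_filter.1 hB
        rw [Finset.mem_powerset] at hBS
        have hss : S \ B ⊂ S := Finset.sdiff_ssubset hBS ⟨x, hxB⟩
        rw [← ih (S \ B) hss (t - 1), Finset.mul_sum]
        refine Finset.sum_congr rfl fun π' hπ' => ?_
        rw [Finset.card_insert_of_notMem (B_not_mem hxB hπ')]
        rw [Finset.prod_range_succ', mul_comm t]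
        congr 1
        · refine Finset.prod_congr rfl fun i _ => ?_
          push_cast
          ring
        · simp
      rw [Finset.sum_congr rfl step]
      have reindex : ∑ B ∈ S.powerset.filter (fun B => x ∈ B), t * (t - 1) ^ (S \ B).card
          = ∑ C ∈ (S.erase x).powerset, t * (t - 1) ^ ((S.erase x).card - C.card) := by
        refine Finset.sum_nbij' (fun B => B.erase x) (fun C => insert x C) ?_ ?_ ?_ ?_ ?_
        · intro B hB
          obtain ⟨hBS, hxB⟩ := Finset.mem_filter.1 hB
          exact Finset.mem_powerset.2 (Finset.erase_subset_erase x (Finset.mem_powerset.1 hBS))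
        · intro C hC
          have hC' := Finset.mem_powerset.1 hC
          refine Finset.mem_filter.2 ⟨Finset.mem_powerset.2 ?_, Finset.mem_insert_self x C⟩
          exact Finset.insert_subset hx (hC'.trans (Finset.erase_subset x S))
        · intro B hB
          exact Finset.insert_erase (Finset.mem_filter.1 hB).2
        · intro C hC
          refine Finset.erase_insert fun h => ?_
          exact Finset.notMem_erase x S (Finset.mem_powerset.1 hC h)
        · intro B hB
          obtain ⟨hBS, hxB⟩ := Finset.mem_filter.1 hB
          rw [Finset.mem_powerset] at hBS
          congr 2
          have e1 : (S \ B).card = S.card - B.card := Finset.card_sdiff_of_subset hBS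
          have e2 : (S.erase x).card = S.card - 1 := Finset.card_erase_of_mem hx
          have e3 : (B.erase x).card = B.card - 1 := Finset.card_erase_of_mem hxB
          have e4 : B.card ≤ S.card := Finset.card_le_card hBS
          have e5 : 1 ≤ B.card := Finset.card_pos.2 ⟨x, hxB⟩
          omega
      rw [reindex, ← Finset.mul_sum, sum_powerset_pow, sub_add_cancel,
        ← Finset.card_erase_add_one hx, pow_succ, mul_comm t]

open TrivSqZeroExt in
theorem prod_eps_sub (m : ℕ) :
    (∏ i ∈ Finset.range (m + 1), (DualNumber.eps - (i : DualNumber ℚ)))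
      = TrivSqZeroExt.inr ((-1 : ℚ) ^ m * m.factorial) := by
  rw [Finset.prod_range_succ']
  have hfst : (∏ i ∈ Finset.range m, (DualNumber.eps - ((i + 1 : ℕ) : DualNumber ℚ))).fst
      = (-1 : ℚ) ^ m * m.factorial := by
    have hmap : fst (∏ i ∈ Finset.range m, (DualNumber.eps - ((i + 1 : ℕ) : DualNumber ℚ)))
        = ∏ i ∈ Finset.range m, fst (DualNumber.eps - ((i + 1 : ℕ) : DualNumber ℚ)) :=
      map_prod (TrivSqZeroExt.fstHom ℚ ℚ ℚ) _ _
    rw [hmap]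
    have : ∀ i ∈ Finset.range m,
        (DualNumber.eps - ((i + 1 : ℕ) : DualNumber ℚ)).fst = -((i : ℚ) + 1) := by
      intro i _
      rw [fst_sub, fst_natCast, DualNumber.fst_eps]
      push_cast; ring
    rw [Finset.prod_congr rfl this]
    have : ∀ i ∈ Finset.range m, -((i : ℚ) + 1) = (-1 : ℚ) * ((i : ℚ) + 1) := fun i _ => by ring
    rw [Finset.prod_congr rfl this, Finset.prod_mul_distrib, Finset.prod_const,
      Finset.card_range]
    congr 1
    have h4 : ∀ i ∈ Finset.range m, ((i : ℚ) + 1) = ((i + 1 : ℕ) : ℚ) := by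
      intro i _; push_cast; ring
    rw [Finset.prod_congr rfl h4, ← Nat.cast_prod, Finset.prod_range_add_one_eq_factorial]
  have : ((0 : ℕ) : DualNumber ℚ) = 0 := by norm_cast
  rw [this, sub_zero]
  ext
  · rw [fst_mul, DualNumber.fst_eps, mul_zero, fst_inr]
  · rw [snd_mul, DualNumber.snd_eps, snd_inr, hfst]
    simp

theorem partitionsOf_nonempty_card {L : ℕ} {S : Finset (Fin L)} (hS : S.Nonempty)
    {π : Finset (Finset (Fin L))} (hπ : π ∈ partitionsOf S) : 1 ≤ π.card := by
  obtain ⟨_, _, hsup, _⟩ := mem_partitionsOf.1 hπ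
  rcases π.eq_empty_or_nonempty with rfl | h
  · simp at hsup
    exact absurd hsup.symm hS.ne_empty
  · exact Finset.card_pos.2 h

theorem stirling_sum_zero {L : ℕ} (S : Finset (Fin L)) (hS : 2 ≤ S.card) :
    ∑ π ∈ partitionsOf S,
      ((-1 : ℚ) ^ (π.card - 1) * ((π.card - 1).factorial : ℚ)) = 0 := by
  have hK := partition_poly_identity (R := DualNumber ℚ) S DualNumber.eps
  have hrhs : (DualNumber.eps : DualNumber ℚ) ^ S.card = 0 := by
    rw [show S.card = 2 + (S.card - 2) by omega, _root_.pow_add, pow_two,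
      DualNumber.eps_mul_eps, zero_mul]
  have hSne : S.Nonempty := Finset.card_pos.1 (by omega)
  have hlhs : ∀ π ∈ partitionsOf S,
      (∏ i ∈ Finset.range π.card, (DualNumber.eps - (i : DualNumber ℚ)))
        = TrivSqZeroExt.inr ((-1 : ℚ) ^ (π.card - 1) * ((π.card - 1).factorial : ℚ)) := by
    intro π hπ
    have h1 := partitionsOf_nonempty_card hSne hπ
    obtain ⟨m, hm⟩ : ∃ m, π.card = m + 1 := ⟨π.card - 1, by omega⟩
    rw [hm]
    simp only [Nat.add_sub_cancel]
    exact prod_eps_sub m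
  rw [Finset.sum_congr rfl hlhs, ← TrivSqZeroExt.inr_sum, hrhs] at hK
  have := TrivSqZeroExt.inr_injective (R := ℚ) (hK.trans (TrivSqZeroExt.inr_zero ℚ).symm)
  exact this

theorem sum_coeff' {ι : Type*} (s : Finset ι) (f : ι → LaurentSeries LamRing) (n : ℤ) :
    (∑ i ∈ s, f i).coeff n = ∑ i ∈ s, (f i).coeff n := by
  classical
  induction s using Finset.cons_induction with
  | empty => simp
  | cons i s his ihs => rw [Finset.sum_cons, Finset.sum_cons, HahnSeries.coeff_add, ihs]

theorem lkS_singleton {L : ℕ} (lk : Fin L → Fin L → ℤ) (α : Fin L) : lkS lk {α} = 0 := by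
  rw [lkS]
  have : (({α} ×ˢ {α} : Finset (Fin L × Fin L)).filter fun p => p.1 < p.2) = ∅ := by
    rw [Finset.filter_eq_empty_iff]
    intro p hp
    rw [Finset.mem_product, Finset.mem_singleton, Finset.mem_singleton] at hp
    rw [hp.1, hp.2]
    exact lt_irrefl α
  rw [this, Finset.sum_empty]

theorem WS_coeff {L : ℕ} (lk : Fin L → Fin L → ℤ)
    (P : Finset (Fin L) → LaurentSeries LamRing) (S : Finset (Fin L)) (n : ℤ) :
    (WS lk P S).coeff n
      = T (2 * lkS lk S) * (T 1 - T (-1)) * (P S).coeff (n + 1) := by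
  rw [WS]
  have h1 : (HahnSeries.C (T (2 * lkS lk S) * (T 1 - T (-1)) : LamRing) * zinv
      : LaurentSeries LamRing)
      = HahnSeries.single (-1 : ℤ) (T (2 * lkS lk S) * (T 1 - T (-1)) : LamRing) := by
    rw [HahnSeries.C_apply, zinv, HahnSeries.single_mul_single, zero_add, mul_one]
  rw [h1]
  have h2 := HahnSeries.coeff_single_mul_add (r := (T (2 * lkS lk S) * (T 1 - T (-1)) : LamRing))
    (x := P S) (a := n + 1) (b := (-1 : ℤ))
  rw [show n + 1 + -1 = n by ring] at h2
  exact h2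

theorem singleton_mem_partitionsOf {L : ℕ} {S : Finset (Fin L)} (hS : S.Nonempty) :
    ({S} : Finset (Finset (Fin L))) ∈ partitionsOf S := by
  refine mem_partitionsOf.2 ⟨?_, ?_, ?_, ?_⟩
  · intro B hB; rw [Finset.mem_singleton] at hB; exact hB ▸ Finset.Subset.refl S
  · intro h; rw [Finset.mem_singleton] at h; exact hS.ne_empty h.symm
  · rw [Finset.sup_singleton]; rfl
  · intro B hB B' hB' hne
    rw [Finset.mem_singleton] at hB hB'
    exact absurd (hB.trans hB'.symm) hne

theorem block_ssubset {L : ℕ} {S : Finset (Fin L)} {π : Finset (Finset (Fin L))}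
    (hπ : π ∈ partitionsOf S) (hne : π ≠ {S}) {B : Finset (Fin L)} (hB : B ∈ π) : B ⊂ S := by
  obtain ⟨hsub, hnem, hsup, hdis⟩ := mem_partitionsOf.1 hπ
  refine Finset.ssubset_iff_subset_ne.2 ⟨hsub B hB, fun hBS => ?_⟩
  apply hne
  ext C
  rw [Finset.mem_singleton]
  constructor
  · intro hC
    by_contra hCS
    have hCB : C ≠ B := fun h => hCS (h.trans hBS)
    have hint := hdis C hC B hB hCB
    have hCsub : C ⊆ B := hBS ▸ hsub C hC
    have : C = ∅ := by
      rw [← hint, Finset.inter_eq_left.2 hCsub]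
    exact hnem (this ▸ hC)
  · rintro rfl
    exact hBS ▸ hB

theorem main_claim {L : ℕ} (lk : Fin L → Fin L → ℤ)
    (P : Finset (Fin L) → LaurentSeries LamRing)
    (horder : ∀ S : Finset (Fin L), S.Nonempty →
      ∀ n : ℤ, n < 1 - (S.card : ℤ) → (P S).coeff n = 0)
    (hconn : ∀ S : Finset (Fin L), 2 ≤ S.card →
      ∀ n : ℤ, n < (S.card : ℤ) - 2 → (WconnS lk P S).coeff n = 0) :
    ∀ S : Finset (Fin L), S.Nonempty →
      (WS lk P S).coeff (-(S.card : ℤ))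
        = ∏ α ∈ S, ((T 1 - T (-1) : LamRing) * (P {α}).coeff 0) := by
  intro S
  induction S using Finset.strongInduction with
  | _ S ih =>
  intro hS
  have h1 : 1 ≤ S.card := Finset.card_pos.2 hS
  rcases eq_or_lt_of_le h1 with h1 | h2
  · obtain ⟨α, rfl⟩ := Finset.card_eq_one.1 h1.symm
    have hx : (-((({α} : Finset (Fin L)).card : ℕ) : ℤ)) + 1 = 0 := by
      rw [Finset.card_singleton]; ring
    rw [WS_coeff, hx, lkS_singleton, mul_zero, T_zero, one_mul, Finset.prod_singleton]
  · have h2' : 2 ≤ S.card := h2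
    have h2z : (2 : ℤ) ≤ (S.card : ℤ) := by exact_mod_cast h2'
    -- properties of blocks
    have hblocksum : ∀ π ∈ partitionsOf S, ∑ B ∈ π, -((B.card : ℕ) : ℤ) = -((S.card : ℕ) : ℤ) := by
      intro π hπ
      obtain ⟨hsub, hnem, hsup, hdis⟩ := mem_partitionsOf.1 hπ
      have hd : ∀ x ∈ π, ∀ y ∈ π, x ≠ y → Disjoint (id x) (id y) := by
        intro x hx y hy hxy
        exact Finset.disjoint_iff_inter_eq_empty.2 (hdis x hx y hy hxy)
      have hcard : ∑ B ∈ π, B.card = S.card := by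
        rw [← hsup, Finset.sup_eq_biUnion, Finset.card_biUnion hd]
        rfl
      have hneg : ∑ B ∈ π, -((B.card : ℕ) : ℤ) = -∑ B ∈ π, ((B.card : ℕ) : ℤ) :=
        Finset.sum_neg_distrib _
      rw [hneg, ← Nat.cast_sum, hcard]
    have hbound : ∀ (π : Finset (Finset (Fin L))), π ∈ partitionsOf S →
        ∀ B ∈ π, ∀ m < -((B.card : ℕ) : ℤ), (WS lk P B).coeff m = 0 := by
      intro π hπ B hB m hm
      obtain ⟨hsub, hnem, hsup, hdis⟩ := mem_partitionsOf.1 hπ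
      have hBne : B.Nonempty := Finset.nonempty_iff_ne_empty.2 fun h => hnem (h ▸ hB)
      rw [WS_coeff, horder B hBne (m + 1) (by omega), mul_zero]
    -- the connected-sum coefficient vanishes
    have hc0 := hconn S h2' (-((S.card : ℕ) : ℤ)) (by omega)
    rw [WconnS] at hc0
    rw [sum_coeff'] at hc0
    have hc1 := hc0
    -- rewrite each term
    have hstepa : ∀ π ∈ partitionsOf S,
        ((-1 : LaurentSeries LamRing) ^ (π.card - 1) *
          ((π.card - 1).factorial : LaurentSeries LamRing) *
            ∏ B ∈ π, WS lk P B).coeff (-((S.card : ℕ) : ℤ))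
        = ((-1 : LamRing) ^ (π.card - 1) * ((π.card - 1).factorial : LamRing)) *
            ∏ B ∈ π, (WS lk P B).coeff (-((B.card : ℕ) : ℤ)) := by
      intro π hπ
      have hCs : ((-1 : LaurentSeries LamRing) ^ (π.card - 1) *
          ((π.card - 1).factorial : LaurentSeries LamRing))
          = HahnSeries.C ((-1 : LamRing) ^ (π.card - 1) * ((π.card - 1).factorial : LamRing)) := by
        rw [map_mul, map_pow, map_neg, map_one, map_natCast]
      rw [hCs, mul_assoc]
      have hCc := HahnSeries.coeff_single_mul_add
        (r := ((-1 : LamRing) ^ (π.card - 1) * ((π.card - 1).factorial : LamRing)))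
        (x := ∏ B ∈ π, WS lk P B) (a := -((S.card : ℕ) : ℤ)) (b := (0 : ℤ))
      rw [add_zero] at hCc
      rw [HahnSeries.C_apply, hCc]
      have hp := (coeff_prod_lt (R := LamRing) π (hbound π hπ)).2
      rw [hblocksum π hπ] at hp
      rw [hp]
      ring
    rw [Finset.sum_congr rfl hstepa] at hc1
    have hmemS : ({S} : Finset (Finset (Fin L))) ∈ partitionsOf S := singleton_mem_partitionsOf hS
    rw [← Finset.add_sum_erase _ _ hmemS] at hc1
    -- the trivial-partition term
    have htriv : ((-1 : LamRing) ^ (({S} : Finset (Finset (Fin L))).card - 1) *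
          (((({S} : Finset (Finset (Fin L))).card - 1).factorial : LamRing))) *
            ∏ B ∈ ({S} : Finset (Finset (Fin L))), (WS lk P B).coeff (-((B.card : ℕ) : ℤ))
        = (WS lk P S).coeff (-((S.card : ℕ) : ℤ)) := by
      rw [Finset.card_singleton, Finset.prod_singleton]
      norm_num
    rw [htriv] at hc1
    -- terms for nontrivial partitions
    set Q : LamRing := ∏ α ∈ S, ((T 1 - T (-1) : LamRing) * (P {α}).coeff 0) with hQdef
    have hQ : ∀ π ∈ (partitionsOf S).erase {S},
        ∏ B ∈ π, (WS lk P B).coeff (-((B.card : ℕ) : ℤ)) = Q := by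
      intro π hπe
      obtain ⟨hπne, hπ⟩ := Finset.mem_erase.1 hπe
      obtain ⟨hsub, hnem, hsup, hdis⟩ := mem_partitionsOf.1 hπ
      have hih : ∀ B ∈ π, (WS lk P B).coeff (-((B.card : ℕ) : ℤ))
          = ∏ α ∈ B, ((T 1 - T (-1) : LamRing) * (P {α}).coeff 0) := by
        intro B hB
        have hBne : B.Nonempty := Finset.nonempty_iff_ne_empty.2 fun h => hnem (h ▸ hB)
        exact ih B (block_ssubset hπ hπne hB) hBne
      rw [Finset.prod_congr rfl hih, hQdef]
      have hd : (↑π : Set (Finset (Fin L))).PairwiseDisjoint id := by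
        intro x hx y hy hxy
        exact Finset.disjoint_iff_inter_eq_empty.2
          (hdis x (by exact_mod_cast hx) y (by exact_mod_cast hy) hxy)
      rw [show S = π.biUnion id from by rw [← Finset.sup_eq_biUnion, hsup],
        Finset.prod_biUnion hd]
      rfl
    have hQr : ∀ π ∈ (partitionsOf S).erase {S},
        ((-1 : LamRing) ^ (π.card - 1) * ((π.card - 1).factorial : LamRing)) *
            ∏ B ∈ π, (WS lk P B).coeff (-((B.card : ℕ) : ℤ))
        = algebraMap ℚ LamRing
            ((-1 : ℚ) ^ (π.card - 1) * ((π.card - 1).factorial : ℚ)) * Q := by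
      intro π hπe
      rw [hQ π hπe, map_mul, map_pow, map_neg, map_one, map_natCast]
    rw [Finset.sum_congr rfl hQr, ← Finset.sum_mul, ← map_sum] at hc1
    -- the Stirling-type sum over nontrivial partitions is -1
    have hr : ∑ π ∈ (partitionsOf S).erase {S},
        ((-1 : ℚ) ^ (π.card - 1) * ((π.card - 1).factorial : ℚ)) = -1 := by
      have h0 := stirling_sum_zero S h2'
      rw [← Finset.add_sum_erase _ _ hmemS] at h0
      rw [Finset.card_singleton] at h0
      norm_num at h0
      linarith
    rw [hr] at hc1
    have : algebraMap ℚ LamRing (-1) = -1 := by rw [map_neg, map_one]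
    rw [this, neg_one_mul] at hc1
    linear_combination hc1

end Helpers

/-- Formal algebraic version of the Lickorish–Millett theorem for links with
`L` components: if every `P_S` has `z`-order `≥ 1 - |S|` (with order `≥ 0` for
one-element `S`) and every connected combination `W^{(c)}_S` with `|S| ≥ 2` has
`z`-order `≥ |S| - 2`, then the coefficient of `z^{1-L}` in `P_{{1,…,L}}` is
`λ^{-lk} (λ^{1/2} - λ^{-1/2})^{L-1} ∏_α p^{K_α}_0`. -/
theorem lickorish_millett_general (L : ℕ) (hL : 0 < L)
    (lk : Fin L → Fin L → ℤ)
    (P : Finset (Fin L) → LaurentSeries LamRing)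
    (horder : ∀ S : Finset (Fin L), S.Nonempty →
      ∀ n : ℤ, n < 1 - (S.card : ℤ) → (P S).coeff n = 0)
    (hknot : ∀ α : Fin L, ∀ n : ℤ, n < 0 → (P {α}).coeff n = 0)
    (hconn : ∀ S : Finset (Fin L), 2 ≤ S.card →
      ∀ n : ℤ, n < (S.card : ℤ) - 2 → (WconnS lk P S).coeff n = 0) :
    (P Finset.univ).coeff (1 - (L : ℤ)) =
      T (-(2 * lkS lk Finset.univ)) * (T 1 - T (-1)) ^ (L - 1) *
        ∏ α : Fin L, (P {α}).coeff 0 := by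
  have hne : (Finset.univ : Finset (Fin L)).Nonempty := ⟨⟨0, hL⟩, Finset.mem_univ _⟩
  have hmain := main_claim lk P horder hconn Finset.univ hne
  have hcardU : (Finset.univ : Finset (Fin L)).card = L := by
    rw [Finset.card_univ, Fintype.card_fin]
  rw [WS_coeff, hcardU] at hmain
  rw [show -(L : ℤ) + 1 = 1 - (L : ℤ) by ring] at hmain
  rw [Finset.prod_mul_distrib, Finset.prod_const, hcardU] at hmain
  have hc_ne : (T 1 - T (-1) : LamRing) ≠ 0 := by
    intro h
    have h2 : (T 1 - T (-1) : LamRing).coeff 1 = 0 := by rw [h]; rfl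
    rw [AddMonoidAlgebra.coeff_sub, Finsupp.sub_apply] at h2
    simp only [LaurentPolynomial.T_apply] at h2
    norm_num at h2
  have hT_ne : (T (2 * lkS lk Finset.univ) : LamRing) ≠ 0 :=
    (LaurentPolynomial.isUnit_T _).ne_zero
  refine mul_left_cancel₀ (mul_ne_zero hT_ne hc_ne) ?_
  rw [hmain]
  rw [show (T (2 * lkS lk Finset.univ) : LamRing) * (T 1 - T (-1)) *
      (T (-(2 * lkS lk Finset.univ)) * (T 1 - T (-1)) ^ (L - 1) *
        ∏ α : Fin L, (P {α}).coeff 0)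
    = T (2 * lkS lk Finset.univ) * T (-(2 * lkS lk Finset.univ)) *
        ((T 1 - T (-1)) * (T 1 - T (-1)) ^ (L - 1) * ∏ α : Fin L, (P {α}).coeff 0) from by ring]
  rw [← T_add, add_neg_cancel, T_zero, one_mul, ← pow_succ']
  rw [show L - 1 + 1 = L by omega]
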